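/- arXiv:2211.11840 — 8 statements merged into one kernel-verified Lean document; each statement's English description precedes it below -/
import Mathlib

section
/- Let g ≥ 1 and let t_1, …, t_n be cycle types of permutations of a 5-element set (each t_i encoded as the multiset of cycle lengths ≥ 2, so the possible types are {5}, {4}, {3,2}, {3}, {2,2}, {2} and the empty type). If the number of indices i for which t_i is the type of an odd permutation (i.e. t_i ∈ {{4}, {3,2}, {2}}) is even, then there exist permutations a_1, b_1, …, a_g, b_g, c_1, …, c_n of Fin 5 such that (∏_{i=1}^g [a_i,b_i]) · (∏_{j=1}^n c_j) = 1, each c_j has cycle type t_j, and the subgroup of Perm (Fin 5) generated by all the a_i, b_i, c_j acts transitively on Fin 5. (This is the generating-vector form, via the Riemann existence theorem, of: a 5-fold covering f : X → Y of compact Riemann surfaces with g_Y = g ≥ 1 and ramification data (t_1,…,t_n) exists if and only if the tuple is even.) -/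
/-!
The product `p` of the `c j` is an even permutation by the parity hypothesis, so it suffices to
write `p⁻¹` as a single commutator `⁅a, b⁆` generating a transitive group, and to take all other
`a i`, `b i` trivial. We ask moreover that `a * b` be a 5-cycle, which gives transitivity; this
property of `p` is invariant under conjugation, so one witness for each cycle type of an even
permutation of `Fin 5` (`1`, `(3)`, `(2,2)`, `(5)`) suffices.
-/

open Equiv
open scoped commutatorElement

/-- An odd cycle type for permutations of a 5-element set: the cycle types of the
odd permutations, i.e. `[4,1]`, `[3,2]` and `[2,1,1,1]` in the paper's notation. -/
def IsOddType (t : Multiset ℕ) : Prop := t = {4} ∨ t = {3, 2} ∨ t = {2}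

instance : DecidablePred IsOddType := fun t => by unfold IsOddType; infer_instance

open Finset

namespace Equiv.Perm

variable {α : Type*} [Fintype α] [DecidableEq α]

theorem sign_list_ofFn_prod {n : ℕ} (c : Fin n → Perm α) :
    sign (List.ofFn c).prod = (-1) ^ #{i | sign (c i) = -1} := by
  rw [map_list_prod, List.map_ofFn, List.prod_ofFn, card_filter, ← prod_pow_eq_pow_sum]
  refine prod_congr rfl fun i _ => ?_
  rcases Int.units_eq_one_or (sign (c i)) with h | h <;> simp [h]

theorem exists_pow_apply_eq_of_cycleType_eq_card {σ : Perm α}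
    (h : σ.cycleType = {Fintype.card α}) (x y : α) : ∃ k : ℕ, (σ ^ k) x = y := by
  have hcycle : σ.IsCycle := card_cycleType_eq_one.mp (by simp [h])
  have hsupp : σ.support = univ :=
    eq_univ_of_card _ (by rw [← sum_cycleType, h, Multiset.sum_singleton])
  have hmoved (z : α) : σ z ≠ z := mem_support.mp (hsupp ▸ mem_univ z)
  exact hcycle.exists_pow_eq (hmoved x) (hmoved y)

theorem exists_commutator_eq_of_cycleType_eq {a b p : Perm α} {s : Multiset ℕ}
    (hab : (a * b).cycleType = s) (hp : ⁅a, b⁆.cycleType = p.cycleType) :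
    ∃ a' b' : Perm α, ⁅a', b'⁆ = p ∧ (a' * b').cycleType = s := by
  obtain ⟨c, rfl⟩ := isConj_iff.mp (isConj_iff_cycleType_eq.mpr hp)
  refine ⟨c * a * c⁻¹, c * b * c⁻¹, ?_, ?_⟩
  · exact (map_commutatorElement (MulAut.conj c) a b).symm
  · rw [← hab, ← cycleType_conj (τ := c) (σ := a * b)]
    group

end Equiv.Perm

open Perm

set_option maxRecDepth 10000 in
theorem cycleType_mem_fin_five (σ : Perm (Fin 5)) :
    σ.cycleType ∈ ({0, {2}, {3}, {4}, {5}, {2, 2}, {3, 2}} : Finset (Multiset ℕ)) := by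
  revert σ
  decide

theorem isOddType_cycleType_iff (σ : Perm (Fin 5)) : IsOddType σ.cycleType ↔ sign σ = -1 := by
  rw [sign_of_cycleType]
  have h := cycleType_mem_fin_five σ
  generalize σ.cycleType = t at h ⊢
  simp only [Finset.mem_insert, Finset.mem_singleton] at h
  rcases h with rfl | rfl | rfl | rfl | rfl | rfl | rfl <;> decide

theorem cycleType_mem_of_sign_eq_one {σ : Perm (Fin 5)} (h : sign σ = 1) :
    σ.cycleType ∈ ({0, {3}, {2, 2}, {5}} : Finset (Multiset ℕ)) := by
  have hmem := cycleType_mem_fin_five σ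
  have heven : ¬IsOddType σ.cycleType := by rw [isOddType_cycleType_iff, h]; decide
  unfold IsOddType at heven
  simp only [Finset.mem_insert, Finset.mem_singleton] at hmem ⊢
  tauto

theorem exists_commutator_eq_of_sign_eq_one {p : Perm (Fin 5)} (hp : sign p = 1) :
    ∃ a b : Perm (Fin 5), ⁅a, b⁆ = p ∧ (a * b).cycleType = {5} := by
  have hmem := cycleType_mem_of_sign_eq_one hp
  simp only [Finset.mem_insert, Finset.mem_singleton] at hmem
  rcases hmem with h | h | h | h
  · exact exists_commutator_eq_of_cycleType_eq (a := 1) (b := c[0, 1, 2, 3, 4])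
      (by decide) (by rw [h]; decide)
  · exact exists_commutator_eq_of_cycleType_eq (a := swap 3 4) (b := c[0, 1, 2, 3])
      (by decide) (by rw [h]; decide)
  · exact exists_commutator_eq_of_cycleType_eq (a := swap 3 4) (b := c[0, 1, 3] * swap 2 4)
      (by decide) (by rw [h]; decide)
  · exact exists_commutator_eq_of_cycleType_eq (a := c[2, 3, 4]) (b := swap 0 2 * swap 1 3)
      (by decide) (by rw [h]; decide)

/-- If `g ≥ 1` and `(t 1, …, t n)` is an even tuple of cycle types of permutations of
`Fin 5`, then there is a generating `(g; m₁, …, mₙ)`-vector `(a₁, b₁, …, a_g, b_g,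
c₁, …, cₙ)` of a transitive subgroup of `Perm (Fin 5)` with each `c j` of cycle
type `t j`. -/
theorem five_fold_covering_exists_iff_even_tuple
    (g n : ℕ) (hg : 1 ≤ g) (t : Fin n → Multiset ℕ)
    (ht : ∀ i, ∃ σ : Equiv.Perm (Fin 5), σ.cycleType = t i)
    (heven : Even (Finset.univ.filter fun i => IsOddType (t i)).card) :
    ∃ (a b : Fin g → Equiv.Perm (Fin 5)) (c : Fin n → Equiv.Perm (Fin 5)),
      (List.ofFn fun i => ⁅a i, b i⁆).prod * (List.ofFn c).prod = 1 ∧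
      (∀ j, (c j).cycleType = t j) ∧
      (∀ x y : Fin 5,
        ∃ σ ∈ Subgroup.closure (Set.range a ∪ Set.range b ∪ Set.range c), σ x = y) := by
  choose c hc using ht
  obtain ⟨g, rfl⟩ := Nat.exists_eq_add_of_le' hg
  have hsign : sign (List.ofFn c).prod⁻¹ = 1 := by
    have hodd : #{i | sign (c i) = -1} = #{i | IsOddType (t i)} := by
      simp only [← hc, isOddType_cycleType_iff]
    rw [map_inv, sign_list_ofFn_prod, hodd, heven.neg_one_pow, inv_one]
  obtain ⟨a, b, hab, hcycle⟩ := exists_commutator_eq_of_sign_eq_one hsign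
  refine ⟨Fin.cons a 1, Fin.cons b 1, c, ?_, hc, fun x y => ?_⟩
  · simp [List.ofFn_succ, hab]
  · obtain ⟨k, hk⟩ := exists_pow_apply_eq_of_cycleType_eq_card (by simpa using hcycle) x y
    have ha : a ∈ Set.range (Fin.cons a 1 : Fin (g + 1) → Perm (Fin 5)) := ⟨0, rfl⟩
    have hb : b ∈ Set.range (Fin.cons b 1 : Fin (g + 1) → Perm (Fin 5)) := ⟨0, rfl⟩
    exact ⟨(a * b) ^ k, pow_mem (mul_mem (Subgroup.subset_closure (.inl (.inl ha)))
      (Subgroup.subset_closure (.inl (.inr hb)))) k, hk⟩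
end

section
/- Every subgroup G of Perm (Fin 5) that acts transitively on Fin 5 is conjugate in Perm (Fin 5) to exactly one of the following five subgroups: the cyclic group C_5 = ⟨(1 2 3 4 5)⟩ of order 5, the dihedral group D_5 = ⟨(1 2 3 4 5), (2 5)(3 4)⟩ of order 10, the affine group Aff(F_5) = ⟨(1 2 3 4 5), (2 3 5 4)⟩ of order 20, the alternating group A_5, or the full symmetric group S_5 = Perm (Fin 5). -/
/-! A transitive subgroup of `Perm (Fin 5)` has order divisible by 5, so by Sylow's theorems it is
conjugate to a subgroup `K` containing `C₅`. Since `C₅` has `n₅(S₅) = 6` conjugates, its normalizer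
has order 20 and is `Aff(F₅)`. If `K ≤ Aff(F₅)`, then `|K| ∈ {5, 10, 20}`, and `K` is `C₅`, `D₅` or
`Aff(F₅)`: a subgroup of index 2 contains all squares, in particular `(2 5)(3 4) = (2 3 5 4)²`.
Otherwise `C₅` is not normal in `K`, so `n₅(K) ≡ 1 [MOD 5]` forces `n₅(K) = 6`: every Sylow
5-subgroup of `S₅` lies in `K`. Then `K` contains every 5-cycle, hence every 3-cycle (a product of
two 5-cycles), hence `A₅`. Uniqueness holds because the five groups have different orders. -/

open Equiv

/-- The cyclic subgroup `C₅ = ⟨(1 2 3 4 5)⟩` of `Perm (Fin 5)`. -/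
def C5 : Subgroup (Equiv.Perm (Fin 5)) := Subgroup.closure {c[0, 1, 2, 3, 4]}

/-- The dihedral subgroup `D₅ = ⟨(1 2 3 4 5), (2 5)(3 4)⟩` of `Perm (Fin 5)`. -/
def D5 : Subgroup (Equiv.Perm (Fin 5)) :=
  Subgroup.closure {c[0, 1, 2, 3, 4], c[1, 4] * c[2, 3]}

/-- The affine subgroup `Aff(F₅) = ⟨(1 2 3 4 5), (2 3 5 4)⟩` of `Perm (Fin 5)`. -/
def Aff5 : Subgroup (Equiv.Perm (Fin 5)) :=
  Subgroup.closure {c[0, 1, 2, 3, 4], c[1, 2, 4, 3]}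

/-- `H` is conjugate to `K` in `Perm (Fin 5)`: `σ H σ⁻¹ = K` for some `σ`. -/
def SubConj (H K : Subgroup (Equiv.Perm (Fin 5))) : Prop :=
  ∃ σ : Equiv.Perm (Fin 5), Subgroup.map (MulAut.conj σ).toMonoidHom H = K

open Equiv.Perm Subgroup

theorem MulAction.natCard_dvd_natCard_of_isPretransitive (G X : Type*) [Group G] [Finite G]
    [MulAction G X] [IsPretransitive G X] [Nonempty X] : Nat.card X ∣ Nat.card G :=
  index_stabilizer_of_transitive G (Classical.arbitrary X) ▸ index_dvd_card _

namespace Sylow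

variable {G : Type*} [Group G] [Finite G] {p : ℕ} [Fact p.Prime] {K : Subgroup G}

noncomputable def mapSubtype (hK : ¬ p ∣ K.index) (P : Sylow p K) : Sylow p G :=
  (P.isPGroup'.map K.subtype).toSylow <| by
    rw [index_map_subtype]
    exact (Fact.out : p.Prime).not_dvd_mul P.not_dvd_index hK

theorem coe_mapSubtype (hK : ¬ p ∣ K.index) (P : Sylow p K) :
    (P.mapSubtype hK : Subgroup G) = (P : Subgroup K).map K.subtype :=
  rfl

theorem mapSubtype_injective (hK : ¬ p ∣ K.index) : Function.Injective (mapSubtype hK) :=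
  fun _ _ h => Sylow.ext <| map_injective K.subtype_injective <| congrArg Sylow.toSubgroup h

theorem card_le_card_of_not_dvd_index (hK : ¬ p ∣ K.index) :
    Nat.card (Sylow p K) ≤ Nat.card (Sylow p G) :=
  Nat.card_le_card_of_injective _ (mapSubtype_injective hK)

theorem le_of_card_eq_card (hK : ¬ p ∣ K.index)
    (h : Nat.card (Sylow p K) = Nat.card (Sylow p G)) (Q : Sylow p G) : (Q : Subgroup G) ≤ K := by
  obtain ⟨P, rfl⟩ :=
    ((Nat.bijective_iff_injective_and_card _).mpr ⟨mapSubtype_injective hK, h⟩).2 Q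
  exact map_subtype_le _

theorem mem_of_card_eq_card (hK : ¬ p ∣ K.index)
    (h : Nat.card (Sylow p K) = Nat.card (Sylow p G)) {g : G} (hg : orderOf g = p) : g ∈ K := by
  have hpg : IsPGroup p (zpowers g) :=
    IsPGroup.of_card (n := 1) (by rw [Nat.card_zpowers, hg, pow_one])
  obtain ⟨Q, hQ⟩ := hpg.exists_le_sylow
  exact le_of_card_eq_card hK h Q (hQ (mem_zpowers g))

end Sylow

namespace PermFinFive

instance fact_prime_five : Fact (Nat.Prime 5) := ⟨Nat.prime_five⟩

abbrev fiveCycle : Perm (Fin 5) := c[0, 1, 2, 3, 4]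
abbrev reflection : Perm (Fin 5) := c[1, 4] * c[2, 3]
abbrev affineGenerator : Perm (Fin 5) := c[1, 2, 4, 3]

theorem card_perm_fin_five : Nat.card (Perm (Fin 5)) = 120 := by
  rw [Nat.card_perm, Nat.card_fin]; rfl

theorem card_mul_index_eq (K : Subgroup (Perm (Fin 5))) : Nat.card K * K.index = 120 :=
  card_perm_fin_five ▸ K.card_mul_index

theorem card_alternatingGroup_fin_five : Nat.card (alternatingGroup (Fin 5)) = 60 := by
  rw [nat_card_alternatingGroup, Nat.card_fin]; rfl

theorem not_five_dvd_index {K : Subgroup (Perm (Fin 5))} (hK : 5 ∣ Nat.card K) :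
    ¬ 5 ∣ K.index := by
  intro hi
  have h := card_mul_index_eq K ▸ mul_dvd_mul hK hi
  norm_num at h

theorem orderOf_fiveCycle : orderOf fiveCycle = 5 := orderOf_eq_prime (by decide) (by decide)

theorem orderOf_reflection : orderOf reflection = 2 := orderOf_eq_prime (by decide) (by decide)

theorem orderOf_affineGenerator : orderOf affineGenerator = 4 :=
  orderOf_eq_prime_pow (p := 2) (n := 1) (by decide) (by decide)

theorem C5_eq_zpowers : C5 = zpowers fiveCycle := (zpowers_eq_closure _).symm

theorem card_C5 : Nat.card C5 = 5 := by rw [C5_eq_zpowers, Nat.card_zpowers, orderOf_fiveCycle]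

theorem index_C5 : C5.index = 24 := by
  have h := card_mul_index_eq C5
  rw [card_C5] at h
  omega

theorem mem_C5_iff {x : Perm (Fin 5)} :
    x ∈ C5 ↔ x ∈ (Finset.range 5).image (fiveCycle ^ ·) := by
  rw [C5_eq_zpowers, mem_zpowers_iff_mem_range_orderOf, orderOf_fiveCycle]

noncomputable def sylowC5 : Sylow 5 (Perm (Fin 5)) :=
  (IsPGroup.of_card (n := 1) (by rw [card_C5, pow_one])).toSylow (by rw [index_C5]; decide)

theorem coe_sylowC5 : (sylowC5 : Subgroup (Perm (Fin 5))) = C5 := rfl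

theorem not_normal_C5 : ¬ C5.Normal := by
  intro h
  have := h.conj_mem fiveCycle (mem_C5_iff.mpr (by decide)) (swap 0 1)
  revert this
  rw [mem_C5_iff]
  decide

theorem card_sylow_five : Nat.card (Sylow 5 (Perm (Fin 5))) = 6 := by
  have hmod := card_sylow_modEq_one 5 (Perm (Fin 5))
  have hdvd := coe_sylowC5 ▸ sylowC5.card_dvd_index
  rw [index_C5] at hdvd
  have hne : Nat.card (Sylow 5 (Perm (Fin 5))) ≠ 1 := fun h =>
    have : Subsingleton (Sylow 5 (Perm (Fin 5))) := (Nat.card_eq_one_iff_unique.mp h).1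
    not_normal_C5 sylowC5.normal_of_subsingleton
  have hle := Nat.le_of_dvd (by norm_num) hdvd
  unfold Nat.ModEq at hmod
  interval_cases h : Nat.card (Sylow 5 (Perm (Fin 5))) <;> omega

theorem fiveCycle_mem_Aff5 : fiveCycle ∈ Aff5 := subset_closure (by simp)

theorem affineGenerator_mem_Aff5 : affineGenerator ∈ Aff5 := subset_closure (by simp)

theorem Aff5_le_normalizer : Aff5 ≤ normalizer (C5 : Set (Perm (Fin 5))) := by
  rw [Aff5, closure_le, Set.insert_subset_iff, Set.singleton_subset_iff]
  refine ⟨le_normalizer (subset_closure rfl), mem_normalizer_fintype fun n hn => ?_⟩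
  obtain ⟨k, rfl⟩ := mem_zpowers_iff.mp (C5_eq_zpowers ▸ hn)
  have hconj : affineGenerator * fiveCycle * affineGenerator⁻¹ = fiveCycle ^ 2 := by decide
  rw [SetLike.mem_coe, C5_eq_zpowers, ← MulAut.conj_apply, map_zpow, MulAut.conj_apply, hconj]
  exact zpow_mem (pow_mem (mem_zpowers _) 2) k

theorem card_normalizer_C5 : Nat.card (normalizer (C5 : Set (Perm (Fin 5)))) = 20 := by
  have h := card_mul_index_eq (normalizer (C5 : Set (Perm (Fin 5))))
  have hindex : (normalizer (C5 : Set (Perm (Fin 5)))).index = 6 :=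
    sylowC5.card_eq_index_normalizer.symm.trans card_sylow_five
  rw [hindex] at h
  omega

theorem twenty_dvd_card_Aff5 : 20 ∣ Nat.card Aff5 :=
  Nat.Coprime.mul_dvd_of_dvd_of_dvd (by norm_num)
    (orderOf_affineGenerator ▸ Aff5.orderOf_dvd_natCard affineGenerator_mem_Aff5)
    (orderOf_fiveCycle ▸ Aff5.orderOf_dvd_natCard fiveCycle_mem_Aff5)

theorem Aff5_eq_normalizer : Aff5 = normalizer (C5 : Set (Perm (Fin 5))) :=
  eq_of_le_of_card_ge Aff5_le_normalizer <| card_normalizer_C5 ▸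
    Nat.le_of_dvd Nat.card_pos twenty_dvd_card_Aff5

theorem card_Aff5 : Nat.card Aff5 = 20 := by rw [Aff5_eq_normalizer, card_normalizer_C5]

theorem reflection_eq_sq : reflection = affineGenerator ^ 2 := by decide

theorem D5_le_iff {K : Subgroup (Perm (Fin 5))} : D5 ≤ K ↔ fiveCycle ∈ K ∧ reflection ∈ K := by
  rw [D5, closure_le, Set.insert_subset_iff, Set.singleton_subset_iff]; rfl

theorem D5_le_Aff5 : D5 ≤ Aff5 :=
  D5_le_iff.mpr ⟨fiveCycle_mem_Aff5, reflection_eq_sq ▸ pow_mem affineGenerator_mem_Aff5 2⟩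

theorem D5_le_alternatingGroup : D5 ≤ alternatingGroup (Fin 5) :=
  D5_le_iff.mpr ⟨mem_alternatingGroup.mpr (by decide), mem_alternatingGroup.mpr (by decide)⟩

theorem card_D5 : Nat.card D5 = 10 := by
  have h5 := orderOf_fiveCycle ▸ D5.orderOf_dvd_natCard (D5_le_iff.mp le_rfl).1
  have h2 := orderOf_reflection ▸ D5.orderOf_dvd_natCard (D5_le_iff.mp le_rfl).2
  have hle := card_Aff5 ▸ card_le_of_le D5_le_Aff5
  have hne : Nat.card D5 ≠ 20 := fun h => by
    have hodd : affineGenerator ∉ alternatingGroup (Fin 5) := by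
      rw [mem_alternatingGroup]; decide
    refine hodd (D5_le_alternatingGroup ?_)
    rw [eq_of_le_of_card_ge D5_le_Aff5 (by rw [h, card_Aff5])]
    exact affineGenerator_mem_Aff5
  have := Nat.card_pos (α := D5)
  omega

theorem D5_le_of_card_eq_ten {K : Subgroup (Perm (Fin 5))} (hC5 : C5 ≤ K) (hK : K ≤ Aff5)
    (hcard : Nat.card K = 10) : D5 ≤ K := by
  have hindex : (K.subgroupOf Aff5).index = 2 := by
    have hrel : (K.subgroupOf Aff5).index * Aff5.index = K.index := relIndex_mul_index hK
    have hK_index := hcard ▸ card_mul_index_eq K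
    have hAff5_index := card_Aff5 ▸ card_mul_index_eq Aff5
    rw [show Aff5.index = 6 by omega] at hrel
    omega
  refine D5_le_iff.mpr ⟨hC5 (subset_closure rfl), ?_⟩
  rw [reflection_eq_sq]
  exact sq_mem_of_index_two hindex ⟨affineGenerator, affineGenerator_mem_Aff5⟩

theorem eq_C5_or_eq_D5_or_eq_Aff5 {K : Subgroup (Perm (Fin 5))} (hC5 : C5 ≤ K) (hK : K ≤ Aff5) :
    K = C5 ∨ K = D5 ∨ K = Aff5 := by
  obtain ⟨m, hm⟩ := card_C5 ▸ card_dvd_of_le hC5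
  have hm4 : m ∣ 4 := by
    have := card_Aff5 ▸ card_dvd_of_le hK
    rw [hm, show 20 = 5 * 4 by rfl] at this
    exact Nat.dvd_of_mul_dvd_mul_left (by norm_num) this
  have hm_cases : m = 1 ∨ m = 2 ∨ m = 4 := by
    have := Nat.le_of_dvd (by norm_num) hm4
    interval_cases m <;> simp_all
  rcases hm_cases with rfl | rfl | rfl
  · exact Or.inl (eq_of_le_of_card_ge hC5 (by rw [hm, card_C5])).symm
  · exact Or.inr (Or.inl (eq_of_le_of_card_ge (D5_le_of_card_eq_ten hC5 hK hm)
      (by rw [hm, card_D5])).symm)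
  · exact Or.inr (Or.inr (eq_of_le_of_card_ge hK (by rw [hm, card_Aff5])))

theorem exists_orderOf_eq_five_mul_eq_threeCycle :
    ∃ a b : Perm (Fin 5), orderOf a = 5 ∧ orderOf b = 5 ∧ a * b = c[0, 1, 2] :=
  ⟨c[0, 2, 3, 4, 1], c[0, 4, 3, 2, 1], orderOf_eq_prime (by decide) (by decide),
    orderOf_eq_prime (by decide) (by decide), by decide⟩

theorem exists_orderOf_eq_five_mul_eq_of_isThreeCycle {τ : Perm (Fin 5)} (hτ : τ.IsThreeCycle) :
    ∃ a b : Perm (Fin 5), orderOf a = 5 ∧ orderOf b = 5 ∧ a * b = τ := by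
  have hconj : IsConj (c[0, 1, 2] : Perm (Fin 5)) τ :=
    isConj_iff_cycleType_eq.mpr (by rw [hτ, card_support_eq_three_iff.mp (by decide)])
  obtain ⟨π, hπ⟩ := isConj_iff.mp hconj
  obtain ⟨a, b, ha, hb, hab⟩ := exists_orderOf_eq_five_mul_eq_threeCycle
  refine ⟨MulAut.conj π a, MulAut.conj π b, ?_, ?_, ?_⟩
  · rw [MulEquiv.orderOf_eq, ha]
  · rw [MulEquiv.orderOf_eq, hb]
  · rw [← map_mul, hab, MulAut.conj_apply, hπ]

theorem alternatingGroup_le_of_forall_orderOf_eq_five {K : Subgroup (Perm (Fin 5))}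
    (hK : ∀ g : Perm (Fin 5), orderOf g = 5 → g ∈ K) : alternatingGroup (Fin 5) ≤ K := by
  rw [← closure_three_cycles_eq_alternating, closure_le]
  intro τ hτ
  obtain ⟨a, b, ha, hb, rfl⟩ := exists_orderOf_eq_five_mul_eq_of_isThreeCycle hτ
  exact mul_mem (hK a ha) (hK b hb)

theorem alternatingGroup_le_of_not_le_Aff5 {K : Subgroup (Perm (Fin 5))} (hC5 : C5 ≤ K)
    (hK : ¬ K ≤ Aff5) : alternatingGroup (Fin 5) ≤ K := by
  have hindex := not_five_dvd_index (card_C5 ▸ card_dvd_of_le hC5)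
  have hne : Nat.card (Sylow 5 K) ≠ 1 := fun h => by
    have : Subsingleton (Sylow 5 K) := (Nat.card_eq_one_iff_unique.mp h).1
    have hnormal : (C5.subgroupOf K).Normal := (sylowC5.subtype hC5).normal_of_subsingleton
    rw [normal_subgroupOf_iff_le_normalizer hC5, ← Aff5_eq_normalizer] at hnormal
    exact hK hnormal
  have hle := card_sylow_five ▸ Sylow.card_le_card_of_not_dvd_index hindex
  have hmod := card_sylow_modEq_one 5 K
  have hpos := Nat.card_pos (α := Sylow 5 K)
  unfold Nat.ModEq at hmod
  have hcard : Nat.card (Sylow 5 K) = Nat.card (Sylow 5 (Perm (Fin 5))) := by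
    rw [card_sylow_five]; omega
  exact alternatingGroup_le_of_forall_orderOf_eq_five fun _ hg =>
    Sylow.mem_of_card_eq_card hindex hcard hg

theorem eq_alternatingGroup_or_eq_top {K : Subgroup (Perm (Fin 5))}
    (hK : alternatingGroup (Fin 5) ≤ K) : K = alternatingGroup (Fin 5) ∨ K = ⊤ := by
  have h60 := card_alternatingGroup_fin_five ▸ card_dvd_of_le hK
  have hle := card_perm_fin_five ▸ K.card_le_card_group
  have hpos := Nat.card_pos (α := K)
  rcases (by omega : Nat.card K = 60 ∨ Nat.card K = 120) with h | h
  · exact Or.inl (eq_of_le_of_card_ge hK (by rw [h, card_alternatingGroup_fin_five])).symm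
  · exact Or.inr ((card_eq_iff_eq_top K).mp (h.trans card_perm_fin_five.symm))

abbrev representatives : Set (Subgroup (Perm (Fin 5))) :=
  {C5, D5, Aff5, alternatingGroup (Fin 5), ⊤}

theorem mem_representatives_of_C5_le {K : Subgroup (Perm (Fin 5))} (hC5 : C5 ≤ K) :
    K ∈ representatives := by
  by_cases hK : K ≤ Aff5
  · rcases eq_C5_or_eq_D5_or_eq_Aff5 hC5 hK with h | h | h <;> simp [h]
  · rcases eq_alternatingGroup_or_eq_top (alternatingGroup_le_of_not_le_Aff5 hC5 hK) with h | h <;>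
      simp [h]

theorem card_injOn_representatives :
    Set.InjOn (fun H : Subgroup (Perm (Fin 5)) => Nat.card H) representatives := by
  simp only [Set.InjOn, Set.mem_insert_iff, Set.mem_singleton_iff]
  rintro H (rfl | rfl | rfl | rfl | rfl) K (rfl | rfl | rfl | rfl | rfl) h <;>
    first
    | rfl
    | simp only [card_C5, card_D5, card_Aff5, card_alternatingGroup_fin_five, card_top,
        card_perm_fin_five] at h; omega

theorem card_map_conj (σ : Perm (Fin 5)) (H : Subgroup (Perm (Fin 5))) :
    Nat.card (H.map (MulAut.conj σ).toMonoidHom) = Nat.card H :=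
  Nat.card_congr (H.equivMapOfInjective _ (MulAut.conj σ).injective).toEquiv.symm

theorem card_eq_of_subConj {H K : Subgroup (Perm (Fin 5))} (h : SubConj H K) :
    Nat.card H = Nat.card K := by
  obtain ⟨σ, rfl⟩ := h
  exact (card_map_conj σ H).symm

theorem five_dvd_card_of_transitive {G : Subgroup (Perm (Fin 5))}
    (htrans : ∀ x y : Fin 5, ∃ g ∈ G, g x = y) : 5 ∣ Nat.card G := by
  have : MulAction.IsPretransitive G (Fin 5) := ⟨fun x y => by
    obtain ⟨g, hg, rfl⟩ := htrans x y
    exact ⟨⟨g, hg⟩, rfl⟩⟩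
  simpa using MulAction.natCard_dvd_natCard_of_isPretransitive G (Fin 5)

theorem exists_C5_le_map_conj {G : Subgroup (Perm (Fin 5))} (hG : 5 ∣ Nat.card G) :
    ∃ σ : Perm (Fin 5), C5 ≤ G.map (MulAut.conj σ).toMonoidHom := by
  obtain ⟨P⟩ := (inferInstance : Nonempty (Sylow 5 G))
  obtain ⟨σ, hσ⟩ :=
    MulAction.exists_smul_eq (Perm (Fin 5)) (P.mapSubtype (not_five_dvd_index hG)) sylowC5
  refine ⟨σ, ?_⟩
  rw [← coe_sylowC5, ← hσ, Sylow.coe_subgroup_smul, Sylow.coe_mapSubtype]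
  exact pointwise_smul_le_pointwise_smul_iff.mpr (map_subtype_le _)

end PermFinFive

open PermFinFive in
/-- Every transitive subgroup of `Perm (Fin 5)` is conjugate to exactly one of:
`C₅`, `D₅`, `Aff(F₅)`, the alternating group `A₅`, or the full symmetric group. -/
theorem transitive_subgroup_of_perm_fin_five_classification
    (G : Subgroup (Equiv.Perm (Fin 5)))
    (htrans : ∀ x y : Fin 5, ∃ g ∈ G, g x = y) :
    ∃! H : Subgroup (Equiv.Perm (Fin 5)),
      H ∈ ({C5, D5, Aff5, alternatingGroup (Fin 5), ⊤} :
        Set (Subgroup (Equiv.Perm (Fin 5)))) ∧ SubConj G H := by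
  obtain ⟨σ, hσ⟩ := exists_C5_le_map_conj (five_dvd_card_of_transitive htrans)
  have hmem := mem_representatives_of_C5_le hσ
  refine ⟨_, ⟨hmem, σ, rfl⟩, fun H ⟨hH, hGH⟩ => ?_⟩
  exact card_injOn_representatives hH hmem
    ((card_eq_of_subConj hGH).symm.trans (card_map_conj σ G).symm)
end

section
/- Let G be a subgroup of Perm (Fin 5) acting transitively on Fin 5. If G contains an element of cycle type {3,2} or an element of cycle type {2} (a single transposition), then G = Perm (Fin 5). -/
open Equiv

private lemma aux32 {α : Type*} [Fintype α] [DecidableEq α] (g : Equiv.Perm α)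
    (h : g.cycleType = {3, 2}) : (g ^ 3).IsSwap := by
  have h' : g.cycleFactorsFinset.val.map (Finset.card ∘ Equiv.Perm.support)
      = (3 ::ₘ {2}) := h
  obtain ⟨c, hc, hc3, herase⟩ := (Multiset.map_eq_cons _ _ _ _).mpr h'
  obtain ⟨d, hderase, hd2⟩ := Multiset.map_eq_singleton.mp herase
  have hd : d ∈ g.cycleFactorsFinset := by
    have hmem : d ∈ g.cycleFactorsFinset.val.erase c := by
      rw [hderase]; exact Multiset.mem_singleton_self d
    exact Multiset.mem_of_mem_erase hmem
  have hc3' : c.support.card = 3 := hc3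
  have hd2' : d.support.card = 2 := hd2
  have hcd : c ≠ d := by
    intro e; rw [e, hd2'] at hc3'; omega
  have hval : g.cycleFactorsFinset.val = c ::ₘ {d} := by
    rw [← Multiset.cons_erase hc, hderase]
  have hfinset : g.cycleFactorsFinset = insert c {d} := by
    apply Finset.val_injective
    rw [hval, Finset.insert_val_of_notMem (by simpa using hcd)]
    rfl
  have hcomm : Commute c d :=
    Equiv.Perm.cycleFactorsFinset_mem_commute g hc hd hcd
  have hgc : g = c * d := by
    obtain ⟨-, hpair, hprod⟩ := Equiv.Perm.cycleFactorsFinset_eq_finset.mp hfinset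
    rw [← hprod, Finset.noncommProd_insert_of_notMem _ _ _ _ (by simpa using hcd),
      Finset.noncommProd_singleton]
    rfl
  have hcyc_c : c.IsCycle := (Equiv.Perm.mem_cycleFactorsFinset_iff.mp hc).1
  have hcyc_d : d.IsCycle := (Equiv.Perm.mem_cycleFactorsFinset_iff.mp hd).1
  have hoc : orderOf c = 3 := hcyc_c.orderOf.trans hc3'
  have hod : orderOf d = 2 := hcyc_d.orderOf.trans hd2'
  have hg3 : g ^ 3 = d := by
    rw [hgc, hcomm.mul_pow]
    have hc1 : c ^ 3 = 1 := by rw [← hoc, pow_orderOf_eq_one]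
    have hd1 : d ^ 3 = d := by
      have : d ^ 2 = 1 := by rw [← hod, pow_orderOf_eq_one]
      rw [pow_succ, this, one_mul]
    rw [hc1, hd1, one_mul]
  rw [hg3]
  exact Equiv.Perm.card_support_eq_two.mp hd2'

private lemma aux2 {α : Type*} [Fintype α] [DecidableEq α] (g : Equiv.Perm α)
    (h : g.cycleType = {2}) : g.IsSwap := by
  apply Equiv.Perm.card_support_eq_two.mp
  rw [← Equiv.Perm.sum_cycleType, h]
  rfl

/-- A transitive subgroup of `Perm (Fin 5)` containing an element of cycle type
`{3,2}` or a transposition is the full symmetric group. -/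
theorem transitive_subgroup_eq_top_of_mem_cycleType_32_or_2
    (G : Subgroup (Equiv.Perm (Fin 5)))
    (htrans : ∀ x y : Fin 5, ∃ g ∈ G, g x = y)
    (h : (∃ g ∈ G, Equiv.Perm.cycleType g = {3, 2}) ∨
      (∃ g ∈ G, Equiv.Perm.cycleType g = {2})) :
    G = ⊤ := by
  classical
  obtain ⟨τ, hτG, hτ⟩ : ∃ τ ∈ G, Equiv.Perm.IsSwap τ := by
    rcases h with ⟨g, hg, hc⟩ | ⟨g, hg, hc⟩
    · exact ⟨g ^ 3, pow_mem hg 3, aux32 g hc⟩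
    · exact ⟨g, hg, aux2 g hc⟩
  have horb : MulAction.orbit G (0 : Fin 5) = Set.univ := by
    ext y
    simp only [Set.mem_univ, iff_true, MulAction.mem_orbit_iff]
    obtain ⟨g, hg, hgy⟩ := htrans 0 y
    exact ⟨⟨g, hg⟩, hgy⟩
  have hdvd : Fintype.card (Fin 5) ∣ Fintype.card G := by
    have hkey := MulAction.card_orbit_mul_card_stabilizer_eq_card_group G (0 : Fin 5)
    have hcard : Fintype.card (MulAction.orbit G (0 : Fin 5)) = Fintype.card (Fin 5) := by
      rw [← Set.toFinset_card]
      simp [horb]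
    rw [hcard] at hkey
    exact ⟨_, hkey.symm⟩
  exact Equiv.Perm.subgroup_eq_top_of_swap_mem (by norm_num) hdvd hτG hτ
end

section
/- Let G be a subgroup of Perm (Fin 5) acting transitively on Fin 5. If G contains an element of cycle type {3} (a 3-cycle) and an element of cycle type {4} (a 4-cycle), then G = Perm (Fin 5). -/
open Equiv

/-- A transitive subgroup of `Perm (Fin 5)` containing both a 3-cycle and a 4-cycle
is the full symmetric group. -/
theorem transitive_subgroup_eq_top_of_mem_cycleType_3_and_4
    (G : Subgroup (Equiv.Perm (Fin 5)))
    (htrans : ∀ x y : Fin 5, ∃ g ∈ G, g x = y)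
    (h3 : ∃ g ∈ G, Equiv.Perm.cycleType g = {3})
    (h4 : ∃ g ∈ G, Equiv.Perm.cycleType g = {4}) :
    G = ⊤ := by
  obtain ⟨g3, hg3G, hg3⟩ := h3
  obtain ⟨g4, hg4G, hg4⟩ := h4
  have ho3 : orderOf g3 = 3 := by
    rw [← Equiv.Perm.lcm_cycleType, hg3, Multiset.lcm_singleton]; rfl
  have ho4 : orderOf g4 = 4 := by
    rw [← Equiv.Perm.lcm_cycleType, hg4, Multiset.lcm_singleton]; rfl
  have hd3 : 3 ∣ Nat.card G := ho3 ▸ Subgroup.orderOf_dvd_natCard G hg3G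
  have hd4 : 4 ∣ Nat.card G := ho4 ▸ Subgroup.orderOf_dvd_natCard G hg4G
  have htr : MulAction.IsPretransitive G (Fin 5) := by
    constructor
    intro x y
    obtain ⟨g, hg, hgy⟩ := htrans x y
    exact ⟨⟨g, hg⟩, hgy⟩
  have hd5 : 5 ∣ Nat.card G := by
    have := MulAction.index_stabilizer_of_transitive G (0 : Fin 5)
    have h := Subgroup.index_dvd_card (MulAction.stabilizer G (0 : Fin 5))
    rwa [this, Nat.card_eq_fintype_card, Fintype.card_fin] at h
  have h60 : 60 ∣ Nat.card G := by omega
  have hcardS : Nat.card (Equiv.Perm (Fin 5)) = 120 := by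
    rw [Nat.card_eq_fintype_card, Fintype.card_perm, Fintype.card_fin]; rfl
  have hmul := Subgroup.index_mul_card G
  rw [hcardS] at hmul
  obtain ⟨k, hk⟩ := h60
  have hik : G.index * k = 2 := by
    have : 60 * (G.index * k) = 60 * 2 := by
      rw [hk, ← mul_assoc, mul_comm G.index 60, mul_assoc] at hmul; omega
    omega
  have hidx : G.index = 1 ∨ G.index = 2 :=
    (Nat.dvd_prime Nat.prime_two).1 ⟨k, hik.symm⟩
  rcases hidx with h1 | h2
  · exact Subgroup.index_eq_one.mp h1
  · exfalso
    have hsq := Subgroup.sq_mem_of_index_two h2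
    have hA : alternatingGroup (Fin 5) ≤ G := by
      rw [← Equiv.Perm.closure_three_cycles_eq_alternating]
      rw [Subgroup.closure_le]
      rintro σ hσ
      have hoσ : orderOf σ = 3 := (Equiv.Perm.IsThreeCycle.orderOf hσ)
      have : (σ ^ 2) ^ 2 = σ := by
        rw [← pow_mul]
        have : σ ^ 4 = σ ^ 3 * σ := by group
        rw [show 2 * 2 = 4 from rfl, this, ← hoσ, pow_orderOf_eq_one, one_mul]
      exact this ▸ hsq (σ ^ 2)
    have hcardA : Nat.card (alternatingGroup (Fin 5)) = 60 := by
      have := two_mul_card_alternatingGroup (α := Fin 5)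
      rw [← Nat.card_eq_fintype_card, ← Nat.card_eq_fintype_card, hcardS] at this
      omega
    have hcardG : Nat.card G = 60 := by rw [h2] at hmul; omega
    have hEq : alternatingGroup (Fin 5) = G :=
      Subgroup.eq_of_le_of_card_ge hA (by omega)
    rw [← hEq] at hg4G
    have := Equiv.Perm.mem_alternatingGroup.mp hg4G
    rw [Equiv.Perm.sign_of_cycleType, hg4] at this
    norm_num at this
end

section
/- Let G be a subgroup of Perm (Fin 5) acting transitively on Fin 5. If G contains an element of cycle type {3} (a 3-cycle), then G = Perm (Fin 5) or G is the alternating group A_5 on Fin 5. -/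
namespace Equiv.Perm

variable {α : Type*} [Fintype α] [DecidableEq α]

theorem eq_top_or_eq_alternatingGroup_of_alternatingGroup_le {G : Subgroup (Perm α)}
    (hG : alternatingGroup α ≤ G) : G = ⊤ ∨ G = alternatingGroup α := by
  nontriviality α
  have hdvd : G.index ∣ 2 :=
    alternatingGroup.index_eq_two (α := α) ▸ Subgroup.index_dvd_of_le hG
  rcases (Nat.dvd_prime Nat.prime_two).mp hdvd with h | h
  · exact .inl (Subgroup.index_eq_one.mp h)
  · exact .inr (eq_alternatingGroup_of_index_eq_two h)

/-- A transitive group of prime degree is primitive, so Jordan's theorem applies. -/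
theorem eq_top_or_eq_alternatingGroup_of_isThreeCycle_mem (hp : (Nat.card α).Prime)
    {G : Subgroup (Perm α)} [MulAction.IsPretransitive G α] {g : Perm α} (h3g : g.IsThreeCycle)
    (hg : g ∈ G) : G = ⊤ ∨ G = alternatingGroup α :=
  eq_top_or_eq_alternatingGroup_of_alternatingGroup_le <|
    alternatingGroup_le_of_isPreprimitive_of_isThreeCycle_mem (.of_prime_card hp) h3g hg

end Equiv.Perm

/-- A transitive subgroup of `Perm (Fin 5)` containing a 3-cycle is the full
symmetric group or the alternating group `A₅`. -/
theorem transitive_subgroup_of_mem_cycleType_3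
    (G : Subgroup (Equiv.Perm (Fin 5)))
    (htrans : ∀ x y : Fin 5, ∃ g ∈ G, g x = y)
    (h3 : ∃ g ∈ G, Equiv.Perm.cycleType g = {3}) :
    G = ⊤ ∨ G = alternatingGroup (Fin 5) := by
  have : MulAction.IsPretransitive G (Fin 5) := ⟨fun x y ↦
    let ⟨g, hg, hgxy⟩ := htrans x y
    ⟨⟨g, hg⟩, hgxy⟩⟩
  obtain ⟨g, hg, h3g⟩ := h3
  have hp : (Nat.card (Fin 5)).Prime := by norm_num
  exact Equiv.Perm.eq_top_or_eq_alternatingGroup_of_isThreeCycle_mem hp h3g hg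
end

section
/- There do not exist elements a, b of the alternating group A_5 ≤ Perm (Fin 5) such that the subgroup generated by a and b is all of A_5 and the commutator [a,b] has cycle type {2,2}. Equivalently, A_5 admits no generating (1;2)-vector (a, b, c) with [a,b]·c = 1 and c of cycle type {2,2}. (This is the group-theoretic content of Theorem 3.9(6a): if f has a single branch value, of type [2,2,1], over a genus-1 base, then the monodromy group is S_5.) -/
open Equiv
open scoped commutatorElement

/-!
Conjugating, we may assume `⁅a, b⁆ = (0 1)(2 3)`. A finite check shows that every even `a` with
`⁅a, b⁆ = (0 1)(2 3)` for some even `b` fixes `4`; as `⁅b, a⁆ = ⁅a, b⁆⁻¹` is the same involution,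
`b` fixes `4` too. So `⟨a, b⟩` lies in a point stabiliser, whereas `A₅` is transitive.
-/

theorem Subgroup.closure_pair_le_stabilizer {G α : Type*} [Group G] [MulAction G α] {a b : G}
    {x : α} (ha : a • x = x) (hb : b • x = x) :
    Subgroup.closure {a, b} ≤ MulAction.stabilizer G x :=
  (Subgroup.closure_le _).mpr (by rintro g (rfl | rfl) <;> assumption)

namespace Equiv.Perm

theorem alternatingGroup_not_le_stabilizer {α : Type*} [Fintype α] [DecidableEq α]
    (h : 3 ≤ Nat.card α) (x : α) : ¬ alternatingGroup α ≤ MulAction.stabilizer (Perm α) x := by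
  intro hle
  have := alternatingGroup.isPretransitive_of_three_le_card α h
  have : Nontrivial α := Finite.one_lt_card_iff_nontrivial.mp (by omega)
  obtain ⟨y, hy⟩ := exists_ne x
  obtain ⟨g, rfl⟩ := MulAction.exists_smul_eq (alternatingGroup α) x y
  exact hy (hle g.2)

theorem conj_apply_eq_self_iff {α : Type*} (g a : Perm α) (y : α) :
    (g * a * g⁻¹) y = y ↔ a (g⁻¹ y) = g⁻¹ y := by
  rw [mul_apply, mul_apply, Perm.eq_inv_iff_eq]

theorem apply_four_eq_of_commutator_eq_swap_mul_swap :
    ∀ a b : Perm (Fin 5), sign a = 1 → sign b = 1 → ⁅a, b⁆ = swap 0 1 * swap 2 3 → a 4 = 4 := by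
  decide +kernel

theorem exists_fixed_of_commutator_cycleType_eq {a b : Perm (Fin 5)}
    (ha : a ∈ alternatingGroup (Fin 5)) (hb : b ∈ alternatingGroup (Fin 5))
    (hc : ⁅a, b⁆.cycleType = {2, 2}) : ∃ x, a x = x ∧ b x = x := by
  set c : Perm (Fin 5) := swap 0 1 * swap 2 3
  have hc' : ⁅a, b⁆.cycleType = c.cycleType := hc.trans (by decide)
  obtain ⟨g, hg⟩ := isConj_iff.mp (isConj_iff_cycleType_eq.mpr hc')
  have hsign : ∀ p ∈ alternatingGroup (Fin 5), sign (g * p * g⁻¹) = 1 := fun p hp =>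
    mem_alternatingGroup.mp ((alternatingGroup.normal).conj_mem p hp g)
  have hab : ⁅g * a * g⁻¹, g * b * g⁻¹⁆ = c := hg ▸ (map_commutatorElement (MulAut.conj g) a b).symm
  have hba : ⁅g * b * g⁻¹, g * a * g⁻¹⁆ = c := by
    rw [← commutatorElement_inv, hab]
    decide
  refine ⟨g⁻¹ 4, ?_, ?_⟩
  · exact (conj_apply_eq_self_iff g a 4).mp <|
      apply_four_eq_of_commutator_eq_swap_mul_swap _ _ (hsign a ha) (hsign b hb) hab
  · exact (conj_apply_eq_self_iff g b 4).mp <|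
      apply_four_eq_of_commutator_eq_swap_mul_swap _ _ (hsign b hb) (hsign a ha) hba

end Equiv.Perm

/-- There are no `a, b ∈ A₅` generating `A₅` whose commutator `⁅a, b⁆` has cycle
type `{2,2}`; i.e. `A₅` admits no generating `(1; 2)`-vector `(a, b, c)` with
`⁅a, b⁆ * c = 1` and `c` of cycle type `{2,2}`. -/
theorem no_generating_one_two_vector_of_alternating :
    ¬ ∃ a b : Equiv.Perm (Fin 5),
      a ∈ alternatingGroup (Fin 5) ∧ b ∈ alternatingGroup (Fin 5) ∧
      Subgroup.closure {a, b} = alternatingGroup (Fin 5) ∧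
      (⁅a, b⁆).cycleType = {2, 2} := by
  rintro ⟨a, b, ha, hb, hgen, hc⟩
  obtain ⟨x, hax, hbx⟩ := Perm.exists_fixed_of_commutator_cycleType_eq ha hb hc
  apply Perm.alternatingGroup_not_le_stabilizer (by simp) x
  exact hgen ▸ Subgroup.closure_pair_le_stabilizer hax hbx
end

section
/- Let G be a subgroup of the alternating group A_5 ≤ Perm (Fin 5) that acts transitively on Fin 5 and contains an element of cycle type {3} (a 3-cycle). Then G = A_5. (This yields Theorem 3.10(4): a 5-fold covering of ℙ¹ all of whose branch values are even, with at least one of type [3,1,1], has monodromy group A_5.) -/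
open Equiv

/-- A transitive subgroup of the alternating group `A₅ ≤ Perm (Fin 5)` containing a
3-cycle is all of `A₅`. -/
theorem transitive_subgroup_of_alternating_with_three_cycle
    (G : Subgroup (Equiv.Perm (Fin 5)))
    (hle : G ≤ alternatingGroup (Fin 5))
    (htrans : ∀ x y : Fin 5, ∃ g ∈ G, g x = y)
    (h3 : ∃ g ∈ G, Equiv.Perm.cycleType g = {3}) :
    G = alternatingGroup (Fin 5) := by
  classical
  obtain ⟨g, hgG, hgc⟩ := h3
  have hg3 : orderOf g = 3 := by
    rw [← Equiv.Perm.lcm_cycleType, hgc, Multiset.lcm_singleton, normalize_eq]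
  have h3dvd : (3 : ℕ) ∣ Nat.card G := by
    have h := Subgroup.orderOf_coe (⟨g, hgG⟩ : G)
    rw [show ((⟨g, hgG⟩ : G) : Perm (Fin 5)) = g from rfl, hg3] at h
    have h2 : orderOf (⟨g, hgG⟩ : G) ∣ Nat.card G := by
      rw [Nat.card_eq_fintype_card]; exact orderOf_dvd_card
    rwa [← h] at h2
  have htr : MulAction.IsPretransitive G (Fin 5) := by
    constructor
    intro x y
    obtain ⟨g, hg, hxy⟩ := htrans x y
    exact ⟨⟨g, hg⟩, hxy⟩
  have h5dvd : (5 : ℕ) ∣ Nat.card G := by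
    have h := MulAction.index_stabilizer_of_transitive G (0 : Fin 5)
    have h2 := Subgroup.index_dvd_card (MulAction.stabilizer G (0 : Fin 5))
    rw [h] at h2
    simpa using h2
  have h15 : (15 : ℕ) ∣ Nat.card G :=
    (show Nat.Coprime 3 5 by norm_num).mul_dvd_of_dvd_of_dvd h3dvd h5dvd
  set H := G.subgroupOf (alternatingGroup (Fin 5)) with hH
  have hcardA : Nat.card (alternatingGroup (Fin 5)) = 60 := by
    have h2 := two_mul_card_alternatingGroup (α := Fin 5)
    have h5 : Fintype.card (Perm (Fin 5)) = 120 := by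
      rw [Fintype.card_perm, Fintype.card_fin]
      norm_num [Nat.factorial]
    rw [h5] at h2
    rw [Nat.card_eq_fintype_card]
    omega
  have hcardH : Nat.card H = Nat.card G :=
    Nat.card_congr (Subgroup.subgroupOfEquivOfLe hle).toEquiv
  have hmul : Nat.card H * H.index = 60 := by rw [Subgroup.card_mul_index, hcardA]
  have h15H : (15 : ℕ) ∣ Nat.card H := hcardH ▸ h15
  have hidx : H.index ∣ 4 := by
    obtain ⟨k, hk⟩ := h15H
    have h4 : 15 * (k * H.index) = 15 * 4 := by rw [← mul_assoc, ← hk, hmul]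
    exact Dvd.intro_left k (Nat.eq_of_mul_eq_mul_left (by norm_num) h4)
  -- normal core argument
  rcases IsSimpleGroup.eq_bot_or_eq_top_of_normal H.normalCore H.normalCore_normal with hbot | htop
  · -- kernel of action on cosets is trivial: embedding A₅ ↪ Perm (A₅ ⧸ H)
    exfalso
    rw [Subgroup.normalCore_eq_ker] at hbot
    have hinj := (MulAction.toPermHom (alternatingGroup (Fin 5)) ((alternatingGroup (Fin 5)) ⧸ H)).ker_eq_bot_iff.mp hbot
    have hle2 : Nat.card (alternatingGroup (Fin 5)) ≤
        Nat.card (Perm ((alternatingGroup (Fin 5)) ⧸ H)) :=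
      Nat.card_le_card_of_injective _ hinj
    have hq : Nat.card ((alternatingGroup (Fin 5)) ⧸ H) = H.index := rfl
    have hperm : Nat.card (Perm ((alternatingGroup (Fin 5)) ⧸ H)) = Nat.factorial H.index := by
      rw [Nat.card_eq_fintype_card, Fintype.card_perm, ← Nat.card_eq_fintype_card, hq]
    have hub : H.index ≤ 4 := Nat.le_of_dvd (by norm_num) hidx
    have hf : Nat.factorial H.index ≤ Nat.factorial 4 := Nat.factorial_le hub
    rw [hcardA, hperm] at hle2
    norm_num [Nat.factorial] at hf
    omega
  · have : alternatingGroup (Fin 5) ≤ G := by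
      rw [← Subgroup.subgroupOf_eq_top, ← hH]
      exact le_antisymm le_top (htop ▸ Subgroup.normalCore_le H)
    exact le_antisymm hle this
end

section
/- There do not exist permutations c_1, c_2, c_3, c_4 of Fin 5, each of cycle type {2,2}, with c_1 c_2 c_3 c_4 = 1, generating the alternating group A_5; and there do not exist permutations c_1, c_2 of cycle type {2,2} and c_3 of cycle type {5} with c_1 c_2 c_3 = 1 generating A_5. (This is the generating-vector content of Theorem 3.10(5a): a 5-fold covering of ℙ¹ with only even branch values, at least one of type [2,2,1], none of type [3,1,1], and ramification degree exactly 8 has monodromy group D_5, not A_5.) -/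
/-!
In both cases the last `cᵢ` is the inverse of the product of the others, so the group is
generated by double transpositions alone. If a set `S` of involutions generates `K` and
`s₀ ∈ S`, the subgroup `R` generated by `s₀ S` is normal in `K`, because
`s (s₀ x) s = (s₀ s)⁻¹ (s₀ x)⁻¹ (s₀ s)` for `s, x ∈ S`. For `K = A₅` simplicity gives either
`R = 1`, and then `K` is generated by `s₀` alone, or `R = K`; either way `R` is not abelian.

But for two involutions `R` is cyclic, generated by `c₁ c₂`, and for three `R = ⟨c₁ c₂, c₁ c₃⟩`
is abelian by a finite check: if `a`, `b`, `c` and `a b c` are double transpositions, then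
`a b` and `a c` commute. As double transpositions are all conjugate, it suffices to check this
for `a = (0 1)(2 3)`.
-/

open Equiv Pointwise

namespace Subgroup

variable {G : Type*} [Group G]

theorem isMulCommutative_of_le {H K : Subgroup G} (hHK : H ≤ K) [IsMulCommutative K] :
    IsMulCommutative H :=
  .of_setLike_mul_comm fun _ ha _ hb => setLike_mul_comm (hHK ha) (hHK hb)

theorem closure_insert_of_mem {s : Set G} {x : G} (hx : x ∈ closure s) :
    closure (insert x s) = closure s :=
  le_antisymm (closure_le _ |>.mpr (Set.insert_subset hx subset_closure))
    (closure_mono (Set.subset_insert x s))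

theorem mem_normalizer_of_mul_self_eq_one {H : Subgroup G} {g : G} (hg : g * g = 1)
    (hH : ∀ h ∈ H, g * h * g⁻¹ ∈ H) : g ∈ normalizer (H : Set G) := by
  refine mem_normalizer_iff.mpr fun h => ⟨hH h, fun hh => ?_⟩
  simpa [inv_eq_of_mul_eq_one_left hg, mul_assoc, ← mul_assoc g g, hg] using hH _ hh

theorem closure_le_normalizer_closure_smul {S : Set G} (hS : ∀ s ∈ S, s * s = 1) {s₀ : G}
    (hs₀ : s₀ ∈ S) : closure S ≤ normalizer (closure (s₀ • S) : Set G) := by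
  have hinv : ∀ s ∈ S, s⁻¹ = s := fun s hs => inv_eq_of_mul_eq_one_left (hS s hs)
  refine (closure_le _).mpr fun s hs =>
    mem_normalizer_of_mul_self_eq_one (hS s hs) fun h hh => ?_
  suffices s₀ • S ⊆ (closure (s₀ • S)).comap (MulAut.conj s).toMonoidHom from
    (closure_le _).mpr this hh
  rintro _ ⟨x, hx, rfl⟩
  have hconj : s * (s₀ • x) * s⁻¹ = (s₀ * s)⁻¹ * (s₀ * x)⁻¹ * (s₀ * s) := by
    simp only [smul_eq_mul, mul_inv_rev, mul_assoc, inv_mul_cancel_left]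
    simp only [hinv s hs, hinv x hx, hinv s₀ hs₀]
  have hmem : ∀ y ∈ S, s₀ * y ∈ closure (s₀ • S) := fun y hy =>
    subset_closure (Set.smul_mem_smul_set hy)
  rw [SetLike.mem_coe, mem_comap, MulEquiv.coe_toMonoidHom, MulAut.conj_apply, hconj]
  exact mul_mem (mul_mem (inv_mem (hmem s hs)) (inv_mem (hmem x hx))) (hmem s hs)

theorem isMulCommutative_closure_of_isMulCommutative_closure_smul {S : Set G}
    (hS : ∀ s ∈ S, s * s = 1) [IsSimpleGroup (closure S)] {s₀ : G} (hs₀ : s₀ ∈ S)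
    [IsMulCommutative (closure (s₀ • S))] : IsMulCommutative (closure S) := by
  have hle : closure (s₀ • S) ≤ closure S := (closure_le _).mpr <| by
    rintro _ ⟨x, hx, rfl⟩
    exact mul_mem (subset_closure hs₀) (subset_closure hx)
  have hnormal : ((closure (s₀ • S)).subgroupOf (closure S)).Normal :=
    (normal_subgroupOf_iff_le_normalizer hle).mpr (closure_le_normalizer_closure_smul hS hs₀)
  rcases hnormal.eq_bot_or_eq_top with hbot | htop
  · have hbot : closure (s₀ • S) = ⊥ := (subgroupOf_eq_bot.mp hbot).eq_bot_of_le hle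
    refine isMulCommutative_of_le (K := zpowers s₀) <| (closure_le _).mpr fun s hs => ?_
    have hs₀s : s₀ * s = 1 := by
      rw [← mem_bot, ← hbot]
      exact subset_closure (Set.smul_mem_smul_set hs)
    rw [SetLike.mem_coe, eq_inv_of_mul_eq_one_right hs₀s]
    exact inv_mem (mem_zpowers s₀)
  · exact isMulCommutative_of_le (subgroupOf_eq_top.mp htop)

end Subgroup

namespace Equiv.Perm

theorem mul_self_eq_one_of_cycleType_eq_two_two {α : Type*} [Fintype α] [DecidableEq α]
    {σ : Perm α} (h : σ.cycleType = {2, 2}) : σ * σ = 1 := by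
  rw [← pow_two, ← orderOf_dvd_iff_pow_eq_one, ← lcm_cycleType, h]
  decide

def doubleTranspositionsFinFive : List (Perm (Fin 5)) :=
  [swap 0 1 * swap 2 3, swap 0 2 * swap 1 3, swap 0 3 * swap 1 2,
   swap 0 1 * swap 2 4, swap 0 2 * swap 1 4, swap 0 4 * swap 1 2,
   swap 0 1 * swap 3 4, swap 0 3 * swap 1 4, swap 0 4 * swap 1 3,
   swap 0 2 * swap 3 4, swap 0 3 * swap 2 4, swap 0 4 * swap 2 3,
   swap 1 2 * swap 3 4, swap 1 3 * swap 2 4, swap 1 4 * swap 2 3]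

set_option maxRecDepth 10000 in
theorem mem_doubleTranspositionsFinFive {σ : Perm (Fin 5)} (h : σ.cycleType = {2, 2}) :
    σ ∈ doubleTranspositionsFinFive := by
  revert σ
  decide

set_option maxRecDepth 10000 in
theorem commute_swap_mul_swap_mul_of_mem_doubleTranspositionsFinFive :
    ∀ b ∈ doubleTranspositionsFinFive, ∀ c ∈ doubleTranspositionsFinFive,
      swap 0 1 * swap 2 3 * b * c ∈ doubleTranspositionsFinFive →
        Commute (swap 0 1 * swap 2 3 * b) (swap 0 1 * swap 2 3 * c) := by
  unfold Commute SemiconjBy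
  decide

theorem commute_mul_mul_of_cycleType_eq_two_two {a b c : Perm (Fin 5)}
    (ha : a.cycleType = {2, 2}) (hb : b.cycleType = {2, 2}) (hc : c.cycleType = {2, 2})
    (habc : (a * b * c).cycleType = {2, 2}) : Commute (a * b) (a * c) := by
  have h₀ : (swap 0 1 * swap 2 3 : Perm (Fin 5)).cycleType = {2, 2} :=
    cycleType_swap_mul_swap_of_nodup (by decide)
  obtain ⟨g, hg⟩ := isConj_iff.mp (isConj_iff_cycleType_eq.mpr (h₀.trans ha.symm))
  change MulAut.conj g _ = a at hg
  subst hg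
  obtain ⟨b, rfl⟩ := (MulAut.conj g).surjective b
  obtain ⟨c, rfl⟩ := (MulAut.conj g).surjective c
  rw [MulAut.conj_apply, cycleType_conj] at hb hc
  rw [← map_mul, ← map_mul, MulAut.conj_apply, cycleType_conj] at habc
  simpa only [map_mul] using (commute_swap_mul_swap_mul_of_mem_doubleTranspositionsFinFive b
    (mem_doubleTranspositionsFinFive hb) c (mem_doubleTranspositionsFinFive hc)
    (mem_doubleTranspositionsFinFive habc)).map (MulAut.conj g)

end Equiv.Perm

theorem closure_ne_alternatingGroup_of_isMulCommutative_closure_smul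
    {S : Set (Perm (Fin 5))} (hS : ∀ s ∈ S, s * s = 1) {s₀ : Perm (Fin 5)} (hs₀ : s₀ ∈ S)
    [IsMulCommutative (Subgroup.closure (s₀ • S))] :
    Subgroup.closure S ≠ alternatingGroup (Fin 5) := by
  intro hgen
  have : IsSimpleGroup (Subgroup.closure S) := hgen ▸ alternatingGroup.isSimpleGroup (by simp)
  have hcomm := Subgroup.isMulCommutative_closure_of_isMulCommutative_closure_smul hS hs₀
  rw [hgen, alternatingGroup.isMulCommutative_iff_card_le_three] at hcomm
  simp at hcomm

theorem closure_pair_ne_alternatingGroup_fin_five {a b : Perm (Fin 5)} (ha : a * a = 1)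
    (hb : b * b = 1) : Subgroup.closure {a, b} ≠ alternatingGroup (Fin 5) := by
  have : IsMulCommutative (Subgroup.closure (a • {a, b})) := by
    rw [Set.smul_set_insert, Set.smul_set_singleton, smul_eq_mul, smul_eq_mul, ha,
      Subgroup.closure_insert_one]
    exact Subgroup.isMulCommutative_closure (by simp)
  exact closure_ne_alternatingGroup_of_isMulCommutative_closure_smul (by simp [ha, hb])
    (Set.mem_insert a {b})

theorem closure_triple_ne_alternatingGroup_fin_five {a b c : Perm (Fin 5)}
    (ha : a.cycleType = {2, 2}) (hb : b.cycleType = {2, 2}) (hc : c.cycleType = {2, 2})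
    (habc : (a * b * c).cycleType = {2, 2}) :
    Subgroup.closure {a, b, c} ≠ alternatingGroup (Fin 5) := by
  have hcomm := Perm.commute_mul_mul_of_cycleType_eq_two_two ha hb hc habc
  have : IsMulCommutative (Subgroup.closure (a • {a, b, c})) := by
    rw [Set.smul_set_insert, Set.smul_set_insert, Set.smul_set_singleton, smul_eq_mul,
      smul_eq_mul, smul_eq_mul, Perm.mul_self_eq_one_of_cycleType_eq_two_two ha,
      Subgroup.closure_insert_one]
    refine Subgroup.isMulCommutative_closure ?_
    rintro x (rfl | rfl) y (rfl | rfl)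
    exacts [rfl, hcomm, hcomm.symm, rfl]
  exact closure_ne_alternatingGroup_of_isMulCommutative_closure_smul
    (by simp [Perm.mul_self_eq_one_of_cycleType_eq_two_two, *]) (Set.mem_insert a {b, c})

/-- No four permutations of cycle type `{2,2}` with product `1` generate `A₅`, and no
two permutations of cycle type `{2,2}` together with a 5-cycle, with product `1`,
generate `A₅`. -/
theorem no_degree_eight_generating_vectors_of_alternating :
    (¬ ∃ c₁ c₂ c₃ c₄ : Equiv.Perm (Fin 5),
      c₁.cycleType = {2, 2} ∧ c₂.cycleType = {2, 2} ∧
      c₃.cycleType = {2, 2} ∧ c₄.cycleType = {2, 2} ∧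
      c₁ * c₂ * c₃ * c₄ = 1 ∧
      Subgroup.closure ({c₁, c₂, c₃, c₄} : Set (Equiv.Perm (Fin 5))) =
        alternatingGroup (Fin 5)) ∧
    (¬ ∃ c₁ c₂ c₃ : Equiv.Perm (Fin 5),
      c₁.cycleType = {2, 2} ∧ c₂.cycleType = {2, 2} ∧ c₃.cycleType = {5} ∧
      c₁ * c₂ * c₃ = 1 ∧
      Subgroup.closure ({c₁, c₂, c₃} : Set (Equiv.Perm (Fin 5))) =
        alternatingGroup (Fin 5)) := by
  constructor
  · rintro ⟨c₁, c₂, c₃, c₄, h₁, h₂, h₃, h₄, hprod, hgen⟩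
    obtain rfl : c₄ = (c₁ * c₂ * c₃)⁻¹ := eq_inv_of_mul_eq_one_right hprod
    have hmem : (c₁ * c₂ * c₃)⁻¹ ∈ Subgroup.closure {c₁, c₂, c₃} :=
      inv_mem (mul_mem (mul_mem (Subgroup.subset_closure (by simp))
        (Subgroup.subset_closure (by simp))) (Subgroup.subset_closure (by simp)))
    rw [Set.pair_comm c₃, Set.insert_comm c₂, Set.insert_comm c₁,
      Subgroup.closure_insert_of_mem hmem] at hgen
    rw [Perm.cycleType_inv] at h₄
    exact closure_triple_ne_alternatingGroup_fin_five h₁ h₂ h₃ h₄ hgen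
  · rintro ⟨c₁, c₂, c₃, h₁, h₂, -, hprod, hgen⟩
    obtain rfl : c₃ = (c₁ * c₂)⁻¹ := eq_inv_of_mul_eq_one_right hprod
    have hmem : (c₁ * c₂)⁻¹ ∈ Subgroup.closure {c₁, c₂} :=
      inv_mem (mul_mem (Subgroup.subset_closure (by simp)) (Subgroup.subset_closure (by simp)))
    rw [Set.pair_comm c₂, Set.insert_comm c₁, Subgroup.closure_insert_of_mem hmem] at hgen
    exact closure_pair_ne_alternatingGroup_fin_five
      (Perm.mul_self_eq_one_of_cycleType_eq_two_two h₁)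
      (Perm.mul_self_eq_one_of_cycleType_eq_two_two h₂) hgen
end
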